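/- arXiv:2206.08051 — 5 statements merged into one kernel-verified Lean document; each statement's English description precedes it below -/
import Mathlib

section
/- Let P be a finite set of m distinct generators in ℝⁿ, let f be the CVDE built on P with kernel K (all local volumes vol_p(C(p)) strictly positive and finite), and let ℙ_m = f dx. For any bounded measurable set E ⊆ ℝⁿ, one has | ℙ_m(E) − (1/m)·|P ∩ E| | ≤ 2R, where R = (1/m)·|{p ∈ P : C(p) ∩ ∂E ≠ ∅}| is the fraction of generators whose Voronoi cell intersects the topological boundary ∂E of E. -/
/-!
Up to a null set of ties the cells tile `ℝⁿ`, so `ℙ_m(E)` is the sum over generators `p` of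
`t_p / m`, where `t_p ∈ [0, 1]` is the share of the `K p`-mass of `C(p)` lying in `E`.
A cell is convex, hence connected, so a cell missing `∂E` lies entirely in `E` or entirely
outside it; then `t_p` equals `1_E(p)` exactly. Only the cells meeting `∂E` contribute an
error, each of size at most `1 / m`, so the total error is at most `R`.
-/

open MeasureTheory Metric Set Filter

noncomputable section

/-- The Voronoi cell of a generator `p` w.r.t. the finite set of generators `P`. -/
def cell {n : ℕ} (P : Finset (EuclideanSpace ℝ (Fin n))) (p : EuclideanSpace ℝ (Fin n)) :
    Set (EuclideanSpace ℝ (Fin n)) :=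
  {x | ∀ q ∈ P, dist x p ≤ dist x q}

/-- A choice of a nearest generator (the generator of the cell containing `x`;
uniquely determined off the cell boundaries). -/
noncomputable def nearest {n : ℕ} (P : Finset (EuclideanSpace ℝ (Fin n)))
    (x : EuclideanSpace ℝ (Fin n)) : EuclideanSpace ℝ (Fin n) :=
  if h : P.Nonempty then (P.exists_min_image (fun p => dist x p) h).choose else 0

/-- The Compactified Voronoi Density Estimator:
`f(x) = K(p,x) / (|P| · vol_p(C(x)))` where `p` is the generator of `C(x)`. -/
noncomputable def cvde {n : ℕ} (P : Finset (EuclideanSpace ℝ (Fin n)))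
    (K : EuclideanSpace ℝ (Fin n) → EuclideanSpace ℝ (Fin n) → ℝ)
    (x : EuclideanSpace ℝ (Fin n)) : ℝ :=
  K (nearest P x) x / (P.card * ∫ y in cell P (nearest P x), K (nearest P x) y)

theorem IsPreconnected.subset_or_disjoint_of_disjoint_frontier {X : Type*} [TopologicalSpace X]
    {s t : Set X} (hs : IsPreconnected s) (h : Disjoint s (frontier t)) :
    s ⊆ t ∨ Disjoint s t := by
  have hcover : s ⊆ interior t ∪ (closure t)ᶜ := fun x hx => by
    by_contra hx'
    simp only [mem_union, mem_compl_iff, not_or, not_not] at hx'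
    exact h.notMem_of_mem_left hx ⟨hx'.2, hx'.1⟩
  rcases hs.subset_or_subset isOpen_interior isClosed_closure.isOpen_compl
      (disjoint_compl_right.mono_left interior_subset_closure) hcover with hin | hout
  · exact Or.inl (hin.trans interior_subset)
  · exact Or.inr (disjoint_compl_left.mono hout subset_closure)

open Function in
theorem integral_biUnion_finset_ae {X F ι : Type*} [MeasurableSpace X] [NormedAddCommGroup F]
    [NormedSpace ℝ F] {μ : Measure X} {f : X → F} (t : Finset ι) {s : ι → Set X}
    (hs : ∀ i ∈ t, NullMeasurableSet (s i) μ)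
    (h's : Set.Pairwise (t : Set ι) (AEDisjoint μ on s))
    (hf : ∀ i ∈ t, IntegrableOn f (s i) μ) :
    ∫ x in ⋃ i ∈ t, s i, f x ∂μ = ∑ i ∈ t, ∫ x in s i, f x ∂μ := by
  classical
  induction t using Finset.induction_on with
  | empty => simp
  | insert a t hat IH =>
    simp only [Finset.coe_insert, Finset.forall_mem_insert, Set.pairwise_insert,
      Finset.set_biUnion_insert] at hs hf h's ⊢
    have hdisj : AEDisjoint μ (s a) (⋃ i ∈ t, s i) := by
      rw [AEDisjoint, inter_iUnion₂]
      exact (measure_biUnion_null_iff t.countable_toSet).2 fun i hi =>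
        (h's.2 i hi (ne_of_mem_of_not_mem hi hat).symm).1
    rw [setIntegral_union₀ hdisj (t.nullMeasurableSet_biUnion hs.2) hf.1
      (integrableOn_finset_iUnion.2 hf.2), Finset.sum_insert hat, IH hs.2 h's.1 hf.2]

theorem ncard_coe_inter_eq_sum_indicator {α : Type*} (s : Finset α) (t : Set α) :
    (((s : Set α) ∩ t).ncard : ℝ) = ∑ x ∈ s, t.indicator 1 x := by
  classical
  have hfilter : (s : Set α) ∩ t = ↑(s.filter (· ∈ t)) := by ext; simp
  rw [hfilter, Set.ncard_coe_finset, Finset.card_filter]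
  simp [indicator_apply]

section SetIntegralFraction

variable {X : Type*} [MeasurableSpace X] {μ : Measure X} {f : X → ℝ} {s t : Set X}

theorem setIntegral_inter_div_mem_Icc (hf : ∀ x, 0 ≤ f x) (hfi : IntegrableOn f s μ) :
    (∫ x in t ∩ s, f x ∂μ) / ∫ x in s, f x ∂μ ∈ Icc 0 1 :=
  ⟨div_nonneg (integral_nonneg hf) (integral_nonneg hf),
    div_le_one_of_le₀ (setIntegral_mono_set hfi (.of_forall hf) inter_subset_right.eventuallyLE)
      (integral_nonneg hf)⟩

theorem setIntegral_inter_div_eq_indicator [TopologicalSpace X] {x : X} (hs : IsPreconnected s)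
    (hx : x ∈ s) (h : Disjoint s (frontier t)) (hI : ∫ x in s, f x ∂μ ≠ 0) :
    (∫ x in t ∩ s, f x ∂μ) / ∫ x in s, f x ∂μ = t.indicator 1 x := by
  rcases hs.subset_or_disjoint_of_disjoint_frontier h with hst | hst
  · rw [inter_eq_right.2 hst, div_self hI, indicator_of_mem (hst hx), Pi.one_apply]
  · rw [hst.symm.inter_eq, indicator_of_notMem (hst.notMem_of_mem_left hx)]
    simp

end SetIntegralFraction

section Bisector

variable {E : Type*} [NormedAddCommGroup E] [InnerProductSpace ℝ E]

theorem convex_setOf_dist_le_dist (p q : E) : Convex ℝ {x : E | dist x p ≤ dist x q} := by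
  have hhalf : {x : E | dist x p ≤ dist x q} =
      {x | inner ℝ x (q - p) ≤ (‖q‖ ^ 2 - ‖p‖ ^ 2) / 2} := by
    ext x
    simp only [mem_ofPred_eq, dist_eq_norm, ← sq_le_sq₀ (norm_nonneg _) (norm_nonneg _),
      norm_sub_sq_real, inner_sub_right]
    constructor <;> intro h <;> linarith
  rw [hhalf]
  exact convex_halfSpace_le
    ⟨fun a b => inner_add_left a b _, fun c a => real_inner_smul_left a _ c⟩ _

theorem measure_setOf_dist_eq_dist [FiniteDimensional ℝ E] [MeasurableSpace E] [BorelSpace E]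
    (μ : Measure E) [μ.IsAddHaarMeasure] {p q : E} (hpq : p ≠ q) :
    μ {x | dist x p = dist x q} = 0 := by
  have hbis : {x | dist x p = dist x q} = (AffineSubspace.perpBisector p q : Set E) := by
    ext x
    simp [AffineSubspace.mem_perpBisector_iff_dist_eq]
  rw [hbis]
  exact Measure.addHaar_affineSubspace μ _ (by simpa using hpq)

end Bisector

section Voronoi

variable {n : ℕ} {P : Finset (EuclideanSpace ℝ (Fin n))} {p x : EuclideanSpace ℝ (Fin n)}

theorem convex_cell (P : Finset (EuclideanSpace ℝ (Fin n))) (p : EuclideanSpace ℝ (Fin n)) :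
    Convex ℝ (cell P p) := by
  simpa only [cell, ofPred_forall] using
    convex_iInter fun q => convex_iInter fun _ => convex_setOf_dist_le_dist p q

theorem isClosed_cell (P : Finset (EuclideanSpace ℝ (Fin n))) (p : EuclideanSpace ℝ (Fin n)) :
    IsClosed (cell P p) := by
  simpa only [cell, ofPred_forall] using
    isClosed_iInter fun q => isClosed_iInter fun _ => isClosed_le (by fun_prop) (by fun_prop)

theorem self_mem_cell (P : Finset (EuclideanSpace ℝ (Fin n))) (p : EuclideanSpace ℝ (Fin n)) :
    p ∈ cell P p := fun q _ => by simp

theorem nearest_mem_and_mem_cell (hP : P.Nonempty) (x : EuclideanSpace ℝ (Fin n)) :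
    nearest P x ∈ P ∧ x ∈ cell P (nearest P x) := by
  rw [nearest, dif_pos hP]
  exact (P.exists_min_image (fun p => dist x p) hP).choose_spec

theorem biUnion_cell_eq_univ (hP : P.Nonempty) : ⋃ p ∈ P, cell P p = univ :=
  eq_univ_of_forall fun x => (nearest_mem_and_mem_cell hP x).elim mem_biUnion

theorem nearest_eq_of_mem_cell (hP : P.Nonempty) (hp : p ∈ P) (hx : x ∈ cell P p)
    (hties : ∀ q ∈ P, dist x p = dist x q → q = p) : nearest P x = p := by
  obtain ⟨hmem, hmin⟩ := nearest_mem_and_mem_cell hP x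
  exact hties _ hmem (le_antisymm (hx _ hmem) (hmin p hp))

theorem aedisjoint_cell {q : EuclideanSpace ℝ (Fin n)} (hp : p ∈ P) (hq : q ∈ P)
    (hpq : p ≠ q) : AEDisjoint volume (cell P p) (cell P q) :=
  measure_mono_null (fun _ hx => le_antisymm (hx.1 q hq) (hx.2 p hp))
    (measure_setOf_dist_eq_dist volume hpq)

theorem ae_forall_dist_eq_imp_eq (P : Finset (EuclideanSpace ℝ (Fin n)))
    (p : EuclideanSpace ℝ (Fin n)) : ∀ᵐ x, ∀ q ∈ P, dist x p = dist x q → q = p := by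
  refine (eventually_all_finset P).2 fun q _ => ?_
  by_cases hqp : q = p
  · exact .of_forall fun _ _ => hqp
  · filter_upwards [measure_eq_zero_iff_ae_notMem.1
      (measure_setOf_dist_eq_dist volume (Ne.symm hqp))] with x hx h
    exact absurd h hx

theorem cvde_ae_eq_on_cell (hP : P.Nonempty) (hp : p ∈ P)
    (K : EuclideanSpace ℝ (Fin n) → EuclideanSpace ℝ (Fin n) → ℝ) :
    cvde P K =ᵐ[volume.restrict (cell P p)]
      fun x => K p x / (P.card * ∫ y in cell P p, K p y) := by
  filter_upwards [ae_restrict_mem (isClosed_cell P p).measurableSet,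
    ae_restrict_of_ae (ae_forall_dist_eq_imp_eq P p)] with x hx hties
  rw [cvde, nearest_eq_of_mem_cell hP hp hx hties]

def cellMassFraction (P : Finset (EuclideanSpace ℝ (Fin n)))
    (K : EuclideanSpace ℝ (Fin n) → EuclideanSpace ℝ (Fin n) → ℝ)
    (E : Set (EuclideanSpace ℝ (Fin n))) (p : EuclideanSpace ℝ (Fin n)) : ℝ :=
  (∫ x in E ∩ cell P p, K p x) / ∫ x in cell P p, K p x

theorem setIntegral_cvde (hP : P.Nonempty)
    {K : EuclideanSpace ℝ (Fin n) → EuclideanSpace ℝ (Fin n) → ℝ}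
    (hK : ∀ p, Integrable (K p)) {E : Set (EuclideanSpace ℝ (Fin n))} (hE : MeasurableSet E) :
    ∫ x in E, cvde P K x = (∑ p ∈ P, cellMassFraction P K E p) / P.card := by
  have hcover : ⋃ p ∈ P, E ∩ cell P p = E := by
    rw [← inter_iUnion₂, biUnion_cell_eq_univ hP, inter_univ]
  have hae : ∀ p ∈ P, cvde P K =ᵐ[volume.restrict (E ∩ cell P p)]
      fun x => K p x / (P.card * ∫ y in cell P p, K p y) := fun p hp =>
    ae_restrict_of_ae_restrict_of_subset inter_subset_right (cvde_ae_eq_on_cell hP hp K)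
  calc ∫ x in E, cvde P K x
      = ∑ p ∈ P, ∫ x in E ∩ cell P p, cvde P K x := by
        conv_lhs => rw [← hcover]
        refine integral_biUnion_finset_ae P
          (fun p _ => (hE.inter (isClosed_cell P p).measurableSet).nullMeasurableSet)
          (fun p hp q hq hpq =>
            (aedisjoint_cell hp hq hpq).mono inter_subset_right inter_subset_right)
          fun p hp => ((hK p).div_const _).integrableOn.congr (hae p hp).symm
    _ = ∑ p ∈ P, cellMassFraction P K E p / P.card := by
        refine Finset.sum_congr rfl fun p hp => ?_
        rw [integral_congr_ae (hae p hp), integral_div, cellMassFraction, div_mul_eq_div_div_swap]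
    _ = (∑ p ∈ P, cellMassFraction P K E p) / P.card := (Finset.sum_div ..).symm

theorem abs_cellMassFraction_sub_indicator_le
    {K : EuclideanSpace ℝ (Fin n) → EuclideanSpace ℝ (Fin n) → ℝ}
    (hK0 : ∀ y, 0 ≤ K p y) (hK : Integrable (K p)) (hvol : 0 < ∫ y in cell P p, K p y)
    (E : Set (EuclideanSpace ℝ (Fin n))) :
    |cellMassFraction P K E p - E.indicator 1 p| ≤
      {q | (cell P q ∩ frontier E).Nonempty}.indicator 1 p := by
  by_cases hb : p ∈ {q | (cell P q ∩ frontier E).Nonempty}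
  · rw [indicator_of_mem hb, Pi.one_apply]
    obtain ⟨h0, h1⟩ := setIntegral_inter_div_mem_Icc (t := E) hK0 hK.integrableOn
    exact abs_sub_le_of_nonneg_of_le h0 h1 (indicator_nonneg (fun _ _ => zero_le_one) p)
      (indicator_apply_le' (fun _ => le_rfl) (fun _ => zero_le_one))
  · rw [indicator_of_notMem hb, cellMassFraction,
      setIntegral_inter_div_eq_indicator (convex_cell P p).isPreconnected (self_mem_cell P p)
        (disjoint_iff_inter_eq_empty.2 (not_nonempty_iff_eq_empty.1 hb)) hvol.ne', sub_self,
      abs_zero]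

end Voronoi

theorem cvde_boundary_residue_bound_general {n : ℕ}
    (P : Finset (EuclideanSpace ℝ (Fin n))) (hP : P.Nonempty)
    (K : EuclideanSpace ℝ (Fin n) → EuclideanSpace ℝ (Fin n) → ℝ)
    (hK0 : ∀ p x, 0 ≤ K p x)
    (hKint : ∀ p, Integrable (K p) volume)
    (hvolpos : ∀ p ∈ P, 0 < ∫ y in cell P p, K p y)
    (E : Set (EuclideanSpace ℝ (Fin n))) (hE : MeasurableSet E) :
    |(∫ x in E, cvde P K x) - ((P : Set (EuclideanSpace ℝ (Fin n))) ∩ E).ncard / P.card| ≤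
      2 * (({p ∈ (P : Set (EuclideanSpace ℝ (Fin n))) |
        (cell P p ∩ frontier E).Nonempty}).ncard / P.card) := by
  set B := {q | (cell P q ∩ frontier E).Nonempty}
  have hm : (0 : ℝ) < P.card := by exact_mod_cast hP.card_pos
  have hboundary : (({p ∈ (P : Set (EuclideanSpace ℝ (Fin n))) |
      (cell P p ∩ frontier E).Nonempty}).ncard : ℝ) = ∑ p ∈ P, B.indicator 1 p :=
    ncard_coe_inter_eq_sum_indicator P B
  rw [setIntegral_cvde hP hKint hE, ncard_coe_inter_eq_sum_indicator, hboundary]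
  calc |(∑ p ∈ P, cellMassFraction P K E p) / P.card - (∑ p ∈ P, E.indicator 1 p) / P.card|
      = |∑ p ∈ P, (cellMassFraction P K E p - E.indicator 1 p)| / P.card := by
        rw [← sub_div, ← Finset.sum_sub_distrib, abs_div, abs_of_pos hm]
    _ ≤ (∑ p ∈ P, B.indicator 1 p) / P.card := by
        gcongr
        exact (Finset.abs_sum_le_sum_abs _ _).trans <| Finset.sum_le_sum fun p hp =>
          abs_cellMassFraction_sub_indicator_le (hK0 p) (hKint p) (hvolpos p hp) E
    _ ≤ 2 * ((∑ p ∈ P, B.indicator 1 p) / P.card) :=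
        le_mul_of_one_le_left (div_nonneg (Finset.sum_nonneg fun p _ =>
          indicator_nonneg (fun _ _ => zero_le_one) p) hm.le) one_le_two

/-- `|ℙ_m(E) − (1/m)|P ∩ E|| ≤ 2R` where `R` is the fraction of generators
whose Voronoi cell intersects the topological boundary of `E`. -/
theorem cvde_boundary_residue_bound {n : ℕ}
    (P : Finset (EuclideanSpace ℝ (Fin n))) (hP : P.Nonempty)
    (K : EuclideanSpace ℝ (Fin n) → EuclideanSpace ℝ (Fin n) → ℝ)
    (hK0 : ∀ p x, 0 ≤ K p x)
    (hKint : ∀ p, Integrable (K p) volume)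
    (hvolpos : ∀ p ∈ P, 0 < ∫ y in cell P p, K p y)
    (E : Set (EuclideanSpace ℝ (Fin n))) (hE : MeasurableSet E)
    (hEbdd : Bornology.IsBounded E) :
    |(∫ x in E, cvde P K x) - ((P : Set (EuclideanSpace ℝ (Fin n))) ∩ E).ncard / P.card| ≤
      2 * (({p ∈ (P : Set (EuclideanSpace ℝ (Fin n))) |
        (cell P p ∩ frontier E).Nonempty}).ncard / P.card) :=
  cvde_boundary_residue_bound_general P hP K hK0 hKint hvolpos E hE
end
end

section
/- Let ρ ∈ L¹(ℝⁿ) be a probability density whose support is all of ℝⁿ (the measure ρ dx assigns positive mass to every nonempty open set), and let ∅ ≠ E ⊆ ℝⁿ be a bounded measurable set. Then there exists a bounded measurable set B ⊇ E such that, as m → ∞, the probability with respect to P sampled as m i.i.d. points from ρ dx that every Voronoi cell of P intersecting E is contained in B tends to 1. -/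
/-!
Cover a ball around `E`, of radius larger by `3`, with finitely many balls of radius `1/2`. Each of
these has positive mass, so with probability `→ 1` every one of them contains a generator. Then
every point of the big ball is within distance `1` of a generator, and a Voronoi cell through a
point `x` of `E` cannot leave `closedBall x 3`: a far point `y` of the cell would be closer to the
generator near the point at distance `3` from `x` on the segment `[x, y]` than to its own generator,
which is within distance `1` of `x`.
-/

open MeasureTheory Metric Set Filter

noncomputable section

lemma exists_dist_eq_dist_sub {V : Type*} [NormedAddCommGroup V] [NormedSpace ℝ V]
    {x y : V} {a : ℝ} (ha₀ : 0 ≤ a) (ha : a ≤ dist x y) :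
    ∃ z, dist x z = a ∧ dist z y = dist x y - a := by
  obtain hxy | hxy := (ha₀.trans ha).eq_or_lt
  · exact ⟨x, by rw [dist_self]; linarith, by linarith⟩
  have hc : a / dist x y ∈ Icc (0 : ℝ) 1 := ⟨by positivity, div_le_one_of_le₀ ha dist_nonneg⟩
  refine ⟨AffineMap.lineMap x y (a / dist x y), ?_, ?_⟩
  · rw [dist_left_lineMap, Real.norm_of_nonneg hc.1, div_mul_cancel₀ _ hxy.ne']
  · rw [dist_lineMap_right, Real.norm_of_nonneg (sub_nonneg.2 hc.2), sub_mul, one_mul,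
      div_mul_cancel₀ _ hxy.ne']

lemma exists_dist_lt_of_subset_iUnion_ball {α ι : Type*} [PseudoMetricSpace α]
    {S P : Set α} {T : Set ι} {c : ι → α} {r : ℝ} (hcover : S ⊆ ⋃ i ∈ T, ball (c i) r)
    (hhit : ∀ i ∈ T, (ball (c i) r ∩ P).Nonempty) :
    ∀ z ∈ S, ∃ q ∈ P, dist z q < 2 * r := by
  intro z hz
  obtain ⟨i, hi, hzi⟩ := mem_iUnion₂.mp (hcover hz)
  obtain ⟨q, hqi, hqP⟩ := hhit i hi
  refine ⟨q, hqP, ?_⟩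
  calc dist z q ≤ dist z (c i) + dist q (c i) := dist_triangle_right _ _ _
    _ < r + r := add_lt_add (mem_ball.mp hzi) (mem_ball.mp hqi)
    _ = 2 * r := by ring

lemma cell_subset_closedBall {n : ℕ} {P : Finset (EuclideanSpace ℝ (Fin n))}
    {p x : EuclideanSpace ℝ (Fin n)} {a δ : ℝ} (hx : x ∈ cell P p) (hδ : 0 ≤ δ) (ha : 2 * δ < a)
    (hnet : ∀ z ∈ closedBall x a, ∃ q ∈ P, dist z q ≤ δ) :
    cell P p ⊆ closedBall x a := by
  intro y hy
  by_contra hfar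
  have hyx : a < dist y x := not_le.mp hfar
  obtain ⟨qx, hqxP, hqx⟩ := hnet x (mem_closedBall_self (by linarith))
  obtain ⟨z, hxz, hzy⟩ := exists_dist_eq_dist_sub (x := x) (y := y) (a := a) (by linarith)
    (by rw [dist_comm]; exact hyx.le)
  obtain ⟨q, hqP, hq⟩ := hnet z (by rw [mem_closedBall, dist_comm, hxz])
  have hxp : dist x p ≤ δ := (hx qx hqxP).trans hqx
  have hyp : dist y p ≤ dist y x - a + δ :=
    calc dist y p ≤ dist y q := hy q hqP
      _ ≤ dist y z + dist z q := dist_triangle _ _ _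
      _ ≤ dist y x - a + δ := by rw [dist_comm y z, hzy, dist_comm x y]; linarith
  have htri := dist_triangle_right y x p
  linarith

section IIDSamples

variable {Ω α : Type*} [MeasurableSpace Ω] [MeasurableSpace α] {Pr : Measure Ω}
  {μ : Measure α} [IsProbabilityMeasure μ] {X : ℕ → Ω → α}

lemma measure_forall_lt_notMem_eq_pow (hXmeas : ∀ i, Measurable (X i))
    (hXdist : ∀ i, Measure.map (X i) Pr = μ) (hXindep : ProbabilityTheory.iIndepFun X Pr)
    {U : Set α} (hU : MeasurableSet U) (m : ℕ) :
    Pr {ω | ∀ i < m, X i ω ∉ U} = (1 - μ U) ^ m := by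
  have hset : {ω | ∀ i < m, X i ω ∉ U} = ⋂ i ∈ Finset.range m, X i ⁻¹' Uᶜ := by
    ext ω; simp
  rw [hset, hXindep.meas_biInter fun i _ => ⟨Uᶜ, hU.compl, rfl⟩]
  simp_rw [← Measure.map_apply (hXmeas _) hU.compl, hXdist, prob_compl_eq_one_sub hU,
    Finset.prod_const, Finset.card_range]

lemma tendsto_measure_forall_exists_lt_mem [IsProbabilityMeasure Pr]
    (hXmeas : ∀ i, Measurable (X i)) (hXdist : ∀ i, Measure.map (X i) Pr = μ)
    (hXindep : ProbabilityTheory.iIndepFun X Pr) {ι : Type*} (T : Finset ι) {U : ι → Set α}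
    (hU : ∀ c ∈ T, MeasurableSet (U c)) (hpos : ∀ c ∈ T, 0 < μ (U c)) :
    Tendsto (fun m => Pr {ω | ∀ c ∈ T, ∃ i < m, X i ω ∈ U c}) atTop (nhds 1) := by
  have hmiss : ∀ m,
      Pr {ω | ∃ c ∈ T, ∀ i < m, X i ω ∉ U c} ≤ ∑ c ∈ T, (1 - μ (U c)) ^ m := by
    intro m
    have hset :
        {ω | ∃ c ∈ T, ∀ i < m, X i ω ∉ U c} = ⋃ c ∈ T, {ω | ∀ i < m, X i ω ∉ U c} := by
      ext ω; simp
    rw [hset]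
    refine (measure_biUnion_finset_le T _).trans (Finset.sum_le_sum fun c hc => ?_)
    rw [measure_forall_lt_notMem_eq_pow hXmeas hXdist hXindep (hU c hc)]
  have hsum : Tendsto (fun m => ∑ c ∈ T, (1 - μ (U c)) ^ m) atTop (nhds 0) := by
    rw [← Finset.sum_const_zero (s := T)]
    refine tendsto_finsetSum T fun c hc => ENNReal.tendsto_pow_atTop_nhds_zero_of_lt_one ?_
    exact ENNReal.sub_lt_self ENNReal.one_ne_top one_ne_zero (hpos c hc).ne'
  have hlower : ∀ m,
      1 - ∑ c ∈ T, (1 - μ (U c)) ^ m ≤ Pr {ω | ∀ c ∈ T, ∃ i < m, X i ω ∈ U c} := by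
    intro m
    have hcover : univ ⊆ {ω | ∀ c ∈ T, ∃ i < m, X i ω ∈ U c} ∪
        {ω | ∃ c ∈ T, ∀ i < m, X i ω ∉ U c} := by
      intro ω _
      by_cases h : ∀ c ∈ T, ∃ i < m, X i ω ∈ U c
      exacts [.inl h, .inr (by simpa using h)]
    rw [tsub_le_iff_right]
    calc 1 = Pr univ := measure_univ.symm
      _ ≤ _ := (measure_mono hcover).trans (measure_union_le _ _)
      _ ≤ _ := by gcongr; exact hmiss m
  refine tendsto_of_tendsto_of_tendsto_of_le_of_le ?_ tendsto_const_nhds hlower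
    fun m => prob_le_one
  simpa using ENNReal.Tendsto.sub tendsto_const_nhds hsum (.inl ENNReal.one_ne_top)

end IIDSamples

theorem voronoi_cells_eventually_in_bounded_set_general {n : ℕ}
    {Ω : Type*} [MeasurableSpace Ω] (Pr : Measure Ω) [IsProbabilityMeasure Pr]
    (μ : Measure (EuclideanSpace ℝ (Fin n)))
    (hμprob : IsProbabilityMeasure μ)
    (hsupp : ∀ U : Set (EuclideanSpace ℝ (Fin n)), IsOpen U → U.Nonempty → 0 < μ U)
    -- the i.i.d. samples
    (X : ℕ → Ω → EuclideanSpace ℝ (Fin n))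
    (hXmeas : ∀ i, Measurable (X i))
    (hXdist : ∀ i, Measure.map (X i) Pr = μ)
    (hXindep : ProbabilityTheory.iIndepFun X Pr)
    -- the generators: the first `m` samples
    (P : ℕ → Ω → Finset (EuclideanSpace ℝ (Fin n)))
    (hP : ∀ m ω, (P m ω : Set (EuclideanSpace ℝ (Fin n))) = (fun i => X i ω) '' Set.Iio m)
    (E : Set (EuclideanSpace ℝ (Fin n)))
    (hEbdd : Bornology.IsBounded E) :
    ∃ B : Set (EuclideanSpace ℝ (Fin n)), E ⊆ B ∧ MeasurableSet B ∧ Bornology.IsBounded B ∧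
      Tendsto (fun m => Pr {ω | ∀ p ∈ P m ω,
          (cell (P m ω) p ∩ E).Nonempty → cell (P m ω) p ⊆ B})
        atTop (nhds 1) := by
  obtain ⟨R, hER⟩ := hEbdd.subset_closedBall 0
  obtain ⟨T, -, hT⟩ := (isCompact_closedBall (0 : EuclideanSpace ℝ (Fin n)) (R + 3))
    |>.elim_nhds_subcover (fun c => ball c (1 / 2)) fun c _ => ball_mem_nhds c (by norm_num)
  refine ⟨closedBall 0 (R + 3), hER.trans (closedBall_subset_closedBall (by linarith)),
    measurableSet_closedBall, isBounded_closedBall, ?_⟩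
  have hall_hit := tendsto_measure_forall_exists_lt_mem hXmeas hXdist hXindep T
    (U := fun c => ball c (1 / 2)) (fun _ _ => measurableSet_ball)
    fun c _ => hsupp _ isOpen_ball (nonempty_ball.2 (by norm_num))
  refine tendsto_of_tendsto_of_tendsto_of_le_of_le hall_hit tendsto_const_nhds
    (fun m => measure_mono ?_) fun m => prob_le_one
  rintro ω hω p - ⟨x, hxp, hxE⟩
  have hball : closedBall x 3 ⊆ closedBall 0 (R + 3) :=
    closedBall_subset_closedBall' (by linarith [mem_closedBall.mp (hER hxE)])
  have hhit : ∀ c ∈ T, (ball c (1 / 2) ∩ P m ω).Nonempty := fun c hc => by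
    obtain ⟨i, hi, hXi⟩ := hω c hc
    exact ⟨X i ω, hXi, by rw [hP]; exact ⟨i, hi, rfl⟩⟩
  have hnet := exists_dist_lt_of_subset_iUnion_ball hT hhit
  refine (cell_subset_closedBall hxp zero_le_one (by norm_num) fun z hz => ?_).trans hball
  obtain ⟨q, hq, hzq⟩ := hnet z (hball hz)
  exact ⟨q, hq, by linarith⟩

/-- for a full-support density `ρ` and a nonempty bounded measurable set `E`,
there is a bounded measurable set `B ⊇ E` such that, with probability tending to `1` as the
number `m` of i.i.d. generators grows, every Voronoi cell intersecting `E` lies inside `B`. -/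
theorem voronoi_cells_eventually_in_bounded_set {n : ℕ}
    {Ω : Type*} [MeasurableSpace Ω] (Pr : Measure Ω) [IsProbabilityMeasure Pr]
    (ρ : EuclideanSpace ℝ (Fin n) → ℝ) (hρ0 : ∀ x, 0 ≤ ρ x) (hρint : Integrable ρ volume)
    (μ : Measure (EuclideanSpace ℝ (Fin n)))
    (hμ : μ = volume.withDensity fun x => ENNReal.ofReal (ρ x))
    (hμprob : IsProbabilityMeasure μ)
    (hsupp : ∀ U : Set (EuclideanSpace ℝ (Fin n)), IsOpen U → U.Nonempty → 0 < μ U)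
    -- the i.i.d. samples
    (X : ℕ → Ω → EuclideanSpace ℝ (Fin n))
    (hXmeas : ∀ i, Measurable (X i))
    (hXdist : ∀ i, Measure.map (X i) Pr = μ)
    (hXindep : ProbabilityTheory.iIndepFun X Pr)
    -- the generators: the first `m` samples
    (P : ℕ → Ω → Finset (EuclideanSpace ℝ (Fin n)))
    (hP : ∀ m ω, (P m ω : Set (EuclideanSpace ℝ (Fin n))) = (fun i => X i ω) '' Set.Iio m)
    (E : Set (EuclideanSpace ℝ (Fin n))) (hEne : E.Nonempty) (hEmeas : MeasurableSet E)
    (hEbdd : Bornology.IsBounded E) :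
    ∃ B : Set (EuclideanSpace ℝ (Fin n)), E ⊆ B ∧ MeasurableSet B ∧ Bornology.IsBounded B ∧
      Tendsto (fun m => Pr {ω | ∀ p ∈ P m ω,
          (cell (P m ω) p ∩ E).Nonempty → cell (P m ω) p ⊆ B})
        atTop (nhds 1) :=
  voronoi_cells_eventually_in_bounded_set_general Pr μ hμprob hsupp X hXmeas hXdist hXindep P hP E
    hEbdd
end
end

section
/- There exist constants c₁, c₂ with 1 < c₁ < c₂ − 1 < 31 such that for every x ∈ ℝⁿ, every δ > 0, every open cone K ⊆ ℝⁿ with apex x of aperture π/12 (i.e. K = {y ∈ ℝⁿ : y ≠ x and the angle between y − x and some fixed unit axis vector v is less than π/24}), and all points p, q, z ∈ K, if ‖x − p‖ < δ, c₁δ ≤ ‖x − q‖ < c₂δ, and ‖x − z‖ ≥ 32δ, then ‖z − q‖ < ‖z − p‖. -/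
/-!
The angle between `q - x` and `z - x` is at most `π/12` (triangle inequality for angles through
the axis), so `⟪q - x, z - x⟫ ≥ cos (π/12) ‖q - x‖ ‖z - x‖ ≥ (17/18) ‖q - x‖ ‖z - x‖`. Expanding
`‖z - q‖²` with this bound gives `‖z - q‖ < ‖z - x‖ - δ` as soon as `2δ ≤ ‖q - x‖ < 31δ` and
`‖z - x‖ ≥ 32δ`, whereas `‖z - p‖ > ‖z - x‖ - δ` by the triangle inequality.
-/

open Metric Set

noncomputable section

/-- The open cone with apex `x`, unit axis direction `v` and half-angle `θ`:
points `y ≠ x` such that the angle between `y − x` and `v` is strictly less than `θ`.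
A cone of aperture `π/12` is a cone of half-angle `π/24`. -/
def openCone {n : ℕ} (x v : EuclideanSpace ℝ (Fin n)) (θ : ℝ) :
    Set (EuclideanSpace ℝ (Fin n)) :=
  {y | y ≠ x ∧ InnerProductGeometry.angle (y - x) v < θ}

open Real InnerProductGeometry
open scoped RealInnerProductSpace

variable {E : Type*} [NormedAddCommGroup E] [InnerProductSpace ℝ E]

lemma angle_lt_add_of_angle_lt {u v w : E} {θ₁ θ₂ : ℝ} (hu : angle u v < θ₁)
    (hw : angle w v < θ₂) : angle u w < θ₁ + θ₂ :=
  calc angle u w ≤ angle u v + angle v w := angle_le_angle_add_angle u v w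
    _ < θ₁ + θ₂ := by rw [angle_comm v w]; exact add_lt_add hu hw

lemma cos_mul_norm_mul_norm_le_inner {u w : E} {φ : ℝ} (hφ : φ ≤ π) (h : angle u w ≤ φ) :
    cos φ * (‖u‖ * ‖w‖) ≤ ⟪u, w⟫ := by
  rw [← cos_angle_mul_norm_mul_norm]
  gcongr
  exact cos_le_cos_of_nonneg_of_le_pi (angle_nonneg u w) hφ h

lemma seventeen_div_eighteen_le_cos_pi_div_twelve : 17 / 18 ≤ cos (π / 12) := by
  have h : (π / 12) ^ 2 ≤ (4 / 12) ^ 2 := by gcongr; exact pi_lt_four.le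
  linarith [one_sub_sq_div_two_le_cos (x := π / 12)]

lemma norm_sub_lt_norm_sub_of_inner_ge {u w : E} {δ : ℝ} (hδ : 0 < δ) (hu₁ : 2 * δ ≤ ‖u‖)
    (hu₂ : ‖u‖ < 31 * δ) (hw : 32 * δ ≤ ‖w‖) (hinner : 17 / 18 * (‖u‖ * ‖w‖) ≤ ⟪u, w⟫) :
    ‖w - u‖ < ‖w‖ - δ := by
  have hsq : ‖w - u‖ ^ 2 = ‖w‖ ^ 2 - 2 * ⟪u, w⟫ + ‖u‖ ^ 2 := by
    rw [norm_sub_sq_real, real_inner_comm]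
  have hwindow : 0 ≤ (‖u‖ - 2 * δ) * (31 * δ - ‖u‖) := mul_nonneg (by linarith) (by linarith)
  have hfar : 0 ≤ (‖w‖ - 32 * δ) * (17 / 9 * ‖u‖ - 2 * δ) :=
    mul_nonneg (by linarith) (by linarith)
  refine lt_of_pow_lt_pow_left₀ 2 (by linarith) ?_
  nlinarith [mul_pos hδ hδ, mul_nonneg hδ.le (sub_nonneg.2 hu₁)]

/-- there are constants `1 < c₁ < c₂ − 1 < 31` such that for every point `x`,
every `δ > 0`, every open cone `K` with apex `x` of aperture `π/12` and all `p, q, z ∈ K`: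
if `‖x−p‖ < δ`, `c₁δ ≤ ‖x−q‖ < c₂δ` and `‖x−z‖ ≥ 32δ`, then `‖z−q‖ < ‖z−p‖`. -/
theorem cone_geometry_lemma :
    ∃ c₁ c₂ : ℝ, 1 < c₁ ∧ c₁ < c₂ - 1 ∧ c₂ - 1 < 31 ∧
      ∀ (n : ℕ) (x v : EuclideanSpace ℝ (Fin n)), ‖v‖ = 1 →
        ∀ δ : ℝ, 0 < δ →
          ∀ p q z : EuclideanSpace ℝ (Fin n),
            p ∈ openCone x v (Real.pi / 24) →
            q ∈ openCone x v (Real.pi / 24) →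
            z ∈ openCone x v (Real.pi / 24) →
            dist x p < δ →
            c₁ * δ ≤ dist x q → dist x q < c₂ * δ →
            32 * δ ≤ dist x z →
            dist z q < dist z p := by
  refine ⟨2, 31, by norm_num, by norm_num, by norm_num, ?_⟩
  intro n x v _ δ hδ p q z _ hq hz hp hq₁ hq₂ hz₁
  have hangle : angle (q - x) (z - x) ≤ π / 12 := by
    have := angle_lt_add_of_angle_lt hq.2 hz.2
    linarith
  have hinner : 17 / 18 * (‖q - x‖ * ‖z - x‖) ≤ ⟪q - x, z - x⟫ :=
    (mul_le_mul_of_nonneg_right seventeen_div_eighteen_le_cos_pi_div_twelve (by positivity)).trans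
      (cos_mul_norm_mul_norm_le_inner (by linarith [pi_pos]) hangle)
  rw [dist_comm x q, dist_eq_norm] at hq₁ hq₂
  rw [dist_comm x z, dist_eq_norm] at hz₁
  have hzq : dist z q < ‖z - x‖ - δ := by
    rw [dist_eq_norm, ← sub_sub_sub_cancel_right z q x]
    exact norm_sub_lt_norm_sub_of_inner_ge hδ hq₁ hq₂ hz₁ hinner
  have hzx : ‖z - x‖ ≤ dist z p + dist x p := by
    rw [← dist_eq_norm, dist_comm x p]; exact dist_triangle z p x
  linarith
end
end

section
/- There exist a finite collection of open cones K₁, …, K_N ⊆ ℝⁿ with apex 0 of aperture π/12 whose closures cover ℝⁿ, and a constant c > 0, such that for every finite set P ⊆ ℝⁿ of distinct generators and every p ∈ P, diam C(p) ≤ c · max_j R_{p,j}, where R_{p,j} = min{ ‖p − q‖ : q ∈ P ∩ (p + K_j) } is the distance from p to its closest neighbour among the generators lying in the translated cone p + K_j (with R_{p,j} = ∞ if P ∩ (p + K_j) = ∅, and the inequality read as trivially true when some R_{p,j} = ∞). -/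
open Metric Set

noncomputable section

/-!
Cover the unit sphere by finitely many open cones of half-angle `π/24` (compactness). If `x`
lies in the cell of `p` and `x - p` lies in the cone `K_j`, then for every generator `q` with
`q - p ∈ K_j` the angle at `p` between `x` and `q` is below `π/12 ≤ π/3`; together with
`‖x - p‖ ≤ ‖x - q‖` this forces `‖x - p‖ ≤ ‖q - p‖`. Hence the cell lies in the closed ball
of radius `max_j R_{p,j}` around `p`, and its diameter is at most twice that radius.
-/

open Filter Topology InnerProductGeometry Real
open scoped RealInnerProductSpace

section InnerProductSpace

variable {E : Type*} [NormedAddCommGroup E] [InnerProductSpace ℝ E]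

theorem norm_le_norm_of_angle_le_pi_div_three {a b : E} (hb : b ≠ 0)
    (hangle : angle a b ≤ π / 3) (h : ‖a‖ ≤ ‖a - b‖) : ‖a‖ ≤ ‖b‖ := by
  have hcos : 1 / 2 ≤ cos (angle a b) := by
    rw [← cos_pi_div_three]
    exact cos_le_cos_of_nonneg_of_le_pi (angle_nonneg a b) (by linarith [pi_pos]) hangle
  have hinner : ‖a‖ * ‖b‖ ≤ 2 * ⟪a, b⟫ := by
    rw [← cos_angle_mul_norm_mul_norm]
    nlinarith [mul_nonneg (norm_nonneg a) (norm_nonneg b)]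
  have hsq : ‖a‖ ^ 2 ≤ ‖a - b‖ ^ 2 := pow_le_pow_left₀ (norm_nonneg a) h 2
  rw [norm_sub_sq_real] at hsq
  nlinarith [norm_pos_iff.2 hb]

theorem exists_unit_vectors_forall_angle_lt [FiniteDimensional ℝ E] {θ : ℝ} (hθ : 0 < θ) :
    ∃ (N : ℕ) (v : Fin N → E), (∀ j, ‖v j‖ = 1) ∧ ∀ y ≠ 0, ∃ j, angle y (v j) < θ := by
  obtain ⟨s, hs, hcover⟩ := (isCompact_sphere (0 : E) 1).elim_nhds_subcover
    (fun w => {u | angle u w < θ}) fun w hw => by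
      have hw0 : w ≠ 0 := ne_zero_of_mem_unit_sphere ⟨w, hw⟩
      have hcont : ContinuousAt (fun u => angle u w) w :=
        (continuousAt_angle (x := (w, w)) hw0 hw0).comp (f := fun u => (u, w))
          (continuousAt_id.prodMk continuousAt_const)
      exact hcont.preimage_mem_nhds (Iio_mem_nhds (by simpa [angle_self hw0] using hθ))
  refine ⟨s.card, fun j => s.equivFin.symm j, fun j => ?_, fun y hy => ?_⟩
  · exact mem_sphere_zero_iff_norm.1 (hs _ (s.equivFin.symm j).2)
  · have hu : ‖y‖⁻¹ • y ∈ sphere (0 : E) 1 := by simp [norm_smul, hy]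
    obtain ⟨w, hws, hw⟩ := mem_iUnion₂.1 (hcover hu)
    refine ⟨s.equivFin ⟨w, hws⟩, ?_⟩
    simpa [angle_smul_left_of_pos _ _ (inv_pos.2 (norm_pos_iff.2 hy))] using hw

end InnerProductSpace

section Voronoi

variable {n : ℕ} {P : Finset (EuclideanSpace ℝ (Fin n))} {p q x y v : EuclideanSpace ℝ (Fin n)}
  {θ : ℝ}

theorem mem_openCone_zero : y ∈ openCone 0 v θ ↔ y ≠ 0 ∧ angle y v < θ := by
  simp [openCone]

theorem smul_mem_openCone_zero {t : ℝ} (ht : 0 < t) (hy : y ∈ openCone 0 v θ) :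
    t • y ∈ openCone 0 v θ := by
  rw [mem_openCone_zero] at hy ⊢
  exact ⟨smul_ne_zero ht.ne' hy.1, by rw [angle_smul_left_of_pos _ _ ht]; exact hy.2⟩

theorem zero_mem_closure_openCone (hy : y ∈ openCone 0 v θ) : 0 ∈ closure (openCone 0 v θ) := by
  have hlim : Tendsto (fun t : ℝ => t • y) (𝓝[>] 0) (𝓝 0) :=
    ((continuous_id.smul continuous_const).tendsto' 0 0 (zero_smul ℝ y)).mono_left
      nhdsWithin_le_nhds
  exact mem_closure_of_tendsto hlim
    (eventually_nhdsWithin_of_forall fun _ ht => smul_mem_openCone_zero ht hy)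

theorem iUnion_closure_openCone_eq_univ (hn : 1 ≤ n) {N : ℕ} {v : Fin N → EuclideanSpace ℝ (Fin n)}
    (hcover : ∀ y ≠ 0, ∃ j, y ∈ openCone 0 (v j) θ) :
    ⋃ j, closure (openCone 0 (v j) θ) = univ := by
  refine eq_univ_of_forall fun x => mem_iUnion.2 ?_
  rcases eq_or_ne x 0 with rfl | hx
  · have he : EuclideanSpace.single (⟨0, hn⟩ : Fin n) (1 : ℝ) ≠ 0 := by simp
    obtain ⟨j, hj⟩ := hcover _ he
    exact ⟨j, zero_mem_closure_openCone hj⟩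
  · obtain ⟨j, hj⟩ := hcover x hx
    exact ⟨j, subset_closure hj⟩

theorem dist_le_dist_of_mem_cell_of_mem_openCone (hθ : θ ≤ π / 6) (hx : x ∈ cell P p)
    (hq : q ∈ P) (hxv : x - p ∈ openCone 0 v θ) (hqv : q - p ∈ openCone 0 v θ) :
    dist x p ≤ dist p q := by
  rw [mem_openCone_zero] at hxv hqv
  have hangle : angle (x - p) (q - p) ≤ π / 3 :=
    calc angle (x - p) (q - p) ≤ angle (x - p) v + angle v (q - p) :=
          angle_le_angle_add_angle _ _ _
      _ ≤ π / 3 := by rw [angle_comm v]; linarith [hxv.2, hqv.2]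
  have hcell : ‖x - p‖ ≤ ‖(x - p) - (q - p)‖ := by
    simpa [dist_eq_norm] using hx q hq
  simpa [dist_eq_norm, norm_sub_rev p q] using
    norm_le_norm_of_angle_le_pi_div_three hqv.1 hangle hcell

theorem edist_le_iInf_of_mem_cell_of_mem_openCone (hθ : θ ≤ π / 6) (hx : x ∈ cell P p)
    (hxv : x - p ∈ openCone 0 v θ) :
    edist x p ≤ ⨅ q ∈ (P : Set (EuclideanSpace ℝ (Fin n))) ∩ {q | q - p ∈ openCone 0 v θ},
      edist p q :=
  le_iInf₂ fun q hq => by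
    rw [edist_dist, edist_dist]
    exact ENNReal.ofReal_le_ofReal (dist_le_dist_of_mem_cell_of_mem_openCone hθ hx hq.1 hxv hq.2)

end Voronoi

/-- there is a finite family of open cones with apex `0` of aperture `π/12`
whose closures cover `ℝⁿ` and a constant `c > 0` such that for every finite generator set
`P` and `p ∈ P`, `diam C(p) ≤ c · max_j R_{p,j}`, where `R_{p,j}` is the distance from `p`
to its closest neighbour among the generators in the translated cone `p + K_j`
(`R_{p,j} = ∞`, read as an infimum in `ℝ≥0∞` over an empty set, if there is none). -/
theorem diam_cell_le_cone_neighbor_distance {n : ℕ} (hn : 1 ≤ n) :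
    ∃ (N : ℕ) (v : Fin N → EuclideanSpace ℝ (Fin n)) (c : ℝ),
      (∀ j, ‖v j‖ = 1) ∧
      (⋃ j, closure (openCone 0 (v j) (Real.pi / 24))) = Set.univ ∧
      0 < c ∧
      ∀ (P : Finset (EuclideanSpace ℝ (Fin n))), ∀ p ∈ P,
        EMetric.diam (cell P p) ≤
          ENNReal.ofReal c *
            ⨆ j, ⨅ q ∈ (P : Set (EuclideanSpace ℝ (Fin n))) ∩
              {q | q - p ∈ openCone 0 (v j) (Real.pi / 24)}, edist p q := by
  have hθ : π / 24 ≤ π / 6 := by linarith [pi_pos]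
  obtain ⟨N, v, hv, hangle⟩ :=
    exists_unit_vectors_forall_angle_lt (E := EuclideanSpace ℝ (Fin n)) (by positivity : 0 < π / 24)
  have hcone : ∀ y ≠ 0, ∃ j, y ∈ openCone 0 (v j) (π / 24) := fun y hy =>
    (hangle y hy).imp fun _ hj => mem_openCone_zero.2 ⟨hy, hj⟩
  refine ⟨N, v, 2, hv, iUnion_closure_openCone_eq_univ hn hcone, two_pos, fun P p _ => ?_⟩
  rw [ENNReal.ofReal_ofNat]
  refine (ediam_mono fun x hx => ?_).trans (ediam_closedEBall_le (x := p))
  rw [mem_closedEBall]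
  rcases eq_or_ne x p with rfl | hxp
  · simp
  obtain ⟨j, hj⟩ := hcone (x - p) (sub_ne_zero.2 hxp)
  exact le_iSup_of_le j (edist_le_iInf_of_mem_cell_of_mem_openCone hθ hx hj)
end
end

section
/- Let P ⊆ ℝⁿ be a finite set of distinct generators, let z ∈ ℝⁿ be a point whose unique closest generator is p ∈ P (so z lies in C(p) and in no other cell), and let σ ∈ S^{n−1} be a unit vector. For q ∈ P \ {p} with ⟨σ, q − p⟩ ≠ 0, set l^q_z(σ) = (‖q − z‖² − ‖p − z‖²) / (2⟨σ, q − p⟩). Then the directional radius l_z(σ) = sup{ t ≥ 0 : z + tσ ∈ C(p) } satisfies: l_z(σ) = min{ l^q_z(σ) : q ∈ P \ {p}, ⟨σ, q − p⟩ ≠ 0, l^q_z(σ) ≥ 0 }, and l_z(σ) = ∞ if no q ∈ P \ {p} has ⟨σ, q − p⟩ ≠ 0 and l^q_z(σ) ≥ 0. -/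
/-!
After squaring, the condition that `z + tσ` is at least as close to `p` as to `q` is linear in
`t`, namely `2t⟨σ, q - p⟩ ≤ ‖q - z‖² - ‖p - z‖²`, because the terms `t²‖σ‖²` cancel. As `p` is
the unique nearest generator of `z`, the right side is positive for `q ≠ p`; so the constraint is
void for `t ≥ 0` when `⟨σ, q - p⟩ ≤ 0` and reads `t ≤ l^q_z(σ)` when `⟨σ, q - p⟩ > 0`, which is
exactly when `l^q_z(σ)` is defined and nonnegative. The supremum of the common lower bounds
`t ≥ 0` of a family of reals is its infimum, with `∞` for the empty family.
-/

open Metric Set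
open scoped RealInnerProductSpace

noncomputable section

/-- The directional radius `l_z(σ) = sup{t ≥ 0 : z + tσ ∈ C(p)} ∈ [0,∞]`,
expressed in `ℝ≥0∞`. -/
noncomputable def dirRadius {n : ℕ} (P : Finset (EuclideanSpace ℝ (Fin n)))
    (p z σ : EuclideanSpace ℝ (Fin n)) : ENNReal :=
  ⨆ t ∈ {t : ℝ | 0 ≤ t ∧ z + t • σ ∈ cell P p}, ENNReal.ofReal t

/-- The quantity `l^q_z(σ) = (‖q−z‖² − ‖p−z‖²) / (2⟨σ, q−p⟩)`. -/
noncomputable def lqz {n : ℕ} (p z σ q : EuclideanSpace ℝ (Fin n)) : ℝ :=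
  (‖q - z‖ ^ 2 - ‖p - z‖ ^ 2) / (2 * ⟪σ, q - p⟫)

theorem dist_add_smul_le_dist_add_smul_iff {E : Type*} [NormedAddCommGroup E]
    [InnerProductSpace ℝ E] (z σ p q : E) (t : ℝ) :
    dist (z + t • σ) p ≤ dist (z + t • σ) q ↔
      2 * t * ⟪σ, q - p⟫ ≤ ‖q - z‖ ^ 2 - ‖p - z‖ ^ 2 := by
  have hdist_sq : ∀ w : E,
      dist (z + t • σ) w ^ 2 = ‖w - z‖ ^ 2 - 2 * t * ⟪σ, w - z⟫ + t ^ 2 * ‖σ‖ ^ 2 := by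
    intro w
    rw [dist_eq_norm, add_sub_right_comm, ← neg_sub w z, ← sub_eq_neg_add, norm_sub_sq_real,
      inner_smul_left, norm_smul, mul_pow, Real.norm_eq_abs, sq_abs, RCLike.conj_to_real]
    ring
  have hinner : ⟪σ, q - p⟫ = ⟪σ, q - z⟫ - ⟪σ, p - z⟫ := by
    rw [← inner_sub_right, sub_sub_sub_cancel_right]
  rw [← sq_le_sq₀ dist_nonneg dist_nonneg, hdist_sq, hdist_sq, hinner]
  constructor <;> intro h <;> linarith

theorem two_mul_mul_le_iff_forall_le_div {a b t : ℝ} (ha : 0 < a) (ht : 0 ≤ t) :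
    2 * t * b ≤ a ↔ (b ≠ 0 → 0 ≤ a / (2 * b) → t ≤ a / (2 * b)) := by
  rcases lt_trichotomy b 0 with hb | rfl | hb
  · have hneg : a / (2 * b) < 0 := div_neg_of_pos_of_neg ha (by linarith)
    exact iff_of_true (by nlinarith) fun _ h => absurd h hneg.not_ge
  · simpa using ha.le
  · simp only [le_div_iff₀ (by positivity : (0 : ℝ) < 2 * b)]
    exact ⟨fun h _ _ => by linarith, fun h => by linarith [h hb.ne' (by linarith)]⟩

theorem ENNReal.iSup_ofReal_lowerBounds_eq_iInf {ι : Type*} (Q : Set ι) (f : ι → ℝ) :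
    ⨆ t ∈ {t : ℝ | 0 ≤ t ∧ ∀ q ∈ Q, t ≤ f q}, ENNReal.ofReal t =
      ⨅ q ∈ Q, ENNReal.ofReal (f q) := by
  refine le_antisymm (iSup₂_le fun t ht => le_iInf₂ fun q hq => ?_) (not_lt.mp fun hlt => ?_)
  · exact ENNReal.ofReal_le_ofReal (ht.2 q hq)
  · obtain ⟨r, hr, hr_gt, hr_lt⟩ := ENNReal.lt_iff_exists_real_btwn.mp hlt
    have hrS : r ∈ {t : ℝ | 0 ≤ t ∧ ∀ q ∈ Q, t ≤ f q} := ⟨hr, fun q hq =>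
      (ENNReal.ofReal_lt_ofReal_iff'.mp (hr_lt.trans_le (iInf₂_le q hq))).1.le⟩
    exact hr_gt.not_ge (le_iSup₂_of_le r hrS le_rfl)

theorem mem_cell_add_smul_iff_forall_le_lqz {n : ℕ} {P : Finset (EuclideanSpace ℝ (Fin n))}
    {p z σ : EuclideanSpace ℝ (Fin n)} (hz : ∀ q ∈ P, q ≠ p → dist z p < dist z q) {t : ℝ}
    (ht : 0 ≤ t) :
    z + t • σ ∈ cell P p ↔ ∀ q ∈ {q ∈ (P : Set (EuclideanSpace ℝ (Fin n))) |
        q ≠ p ∧ ⟪σ, q - p⟫ ≠ 0 ∧ 0 ≤ lqz p z σ q}, t ≤ lqz p z σ q := by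
  simp only [cell, mem_ofPred_eq, dist_add_smul_le_dist_add_smul_iff, Finset.mem_coe, and_imp]
  refine forall₂_congr fun q hq => ?_
  by_cases hqp : q = p
  · simp [hqp]
  · have hdist := hz q hq hqp
    rw [dist_comm z p, dist_comm z q, dist_eq_norm, dist_eq_norm] at hdist
    have hA : 0 < ‖q - z‖ ^ 2 - ‖p - z‖ ^ 2 :=
      sub_pos.mpr (pow_lt_pow_left₀ hdist (norm_nonneg _) two_ne_zero)
    rw [two_mul_mul_le_iff_forall_le_div hA ht]
    simp only [lqz, hqp, ne_eq, not_false_eq_true, true_implies]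

theorem dirRadius_eq_min_lqz_general {n : ℕ}
    (P : Finset (EuclideanSpace ℝ (Fin n))) (p : EuclideanSpace ℝ (Fin n))
    (z : EuclideanSpace ℝ (Fin n)) (hz : ∀ q ∈ P, q ≠ p → dist z p < dist z q)
    (σ : EuclideanSpace ℝ (Fin n)) :
    dirRadius P p z σ =
      ⨅ q ∈ {q ∈ (P : Set (EuclideanSpace ℝ (Fin n))) |
          q ≠ p ∧ ⟪σ, q - p⟫ ≠ 0 ∧ 0 ≤ lqz p z σ q},
        ENNReal.ofReal (lqz p z σ q) := by
  have hcell : {t : ℝ | 0 ≤ t ∧ z + t • σ ∈ cell P p} = {t : ℝ | 0 ≤ t ∧ ∀ q ∈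
      {q ∈ (P : Set (EuclideanSpace ℝ (Fin n))) | q ≠ p ∧ ⟪σ, q - p⟫ ≠ 0 ∧ 0 ≤ lqz p z σ q},
      t ≤ lqz p z σ q} := by
    ext t
    exact and_congr_right (mem_cell_add_smul_iff_forall_le_lqz hz)
  rw [dirRadius, hcell, ENNReal.iSup_ofReal_lowerBounds_eq_iInf]

/-- for `z` with unique closest generator `p` and a unit vector `σ`, the
directional radius equals `min{ l^q_z(σ) : q ∈ P \ {p}, ⟨σ, q−p⟩ ≠ 0, l^q_z(σ) ≥ 0 }`;
the infimum in `ℝ≥0∞` over an empty index set is `∞`, which encodes the convention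
`l_z(σ) = ∞` when no such `q` exists. -/
theorem dirRadius_eq_min_lqz {n : ℕ}
    (P : Finset (EuclideanSpace ℝ (Fin n))) (p : EuclideanSpace ℝ (Fin n)) (hp : p ∈ P)
    (z : EuclideanSpace ℝ (Fin n)) (hz : ∀ q ∈ P, q ≠ p → dist z p < dist z q)
    (σ : EuclideanSpace ℝ (Fin n)) (hσ : ‖σ‖ = 1) :
    dirRadius P p z σ =
      ⨅ q ∈ {q ∈ (P : Set (EuclideanSpace ℝ (Fin n))) |
          q ≠ p ∧ ⟪σ, q - p⟫ ≠ 0 ∧ 0 ≤ lqz p z σ q},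
        ENNReal.ofReal (lqz p z σ q) :=
  dirRadius_eq_min_lqz_general P p z hz σ
end
end
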